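/- For even n = 2m, the polynomial p(s) = ₂F₁(-m, (μ+s)/2; μ+1/2; 2) satisfies the difference equation [2(n+μ)+1](s+μ-2) p(s) - (s+μ)(s+μ-2) p(s+2) + [(s-2)(s-1) + (1-μ)μ] p(s-2) = 0 for all complex s. -/

import Mathlib

/-! With `b = (μ + s) / 2` and `c = μ + 1/2`, the difference equation is `2 (s + μ - 2)` times
Gauss' contiguous relation `(2m + c) F(b) - b F(b + 1) + (b - c) F(b - 1) = 0` for
`F(b) = ₂F₁(-m, b; c; 2)`. That relation telescopes: the `j`-th term of the combination is
`W j - W (j + 1)`, where `W (j + 1) = 2 (j - m)` times the `j`-th term of `F(b)`, and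
`W 0 = W (m + 1) = 0`. -/

/-- Rising factorial (Pochhammer symbol) on ℂ. -/
noncomputable def ascC (a : ℂ) (k : ℕ) : ℂ := ∏ i ∈ Finset.range k, (a + i)

/-- Terminating Gauss hypergeometric sum `₂F₁(-n, b; c; 2)`. -/
noncomputable def F2 (n : ℕ) (b c : ℂ) : ℂ :=
  ∑ j ∈ Finset.range (n + 1),
    ascC (-(n : ℂ)) j * ascC b j / ascC c j * 2 ^ j / (j.factorial : ℂ)

open Finset

lemma ascC_succ (a : ℂ) (k : ℕ) : ascC a (k + 1) = ascC a k * (a + k) :=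
  prod_range_succ _ _

lemma ascC_succ' (a : ℂ) (k : ℕ) : ascC a (k + 1) = a * ascC (a + 1) k := by
  simp only [ascC, prod_range_succ', Nat.cast_add, Nat.cast_one, Nat.cast_zero, add_zero]
  rw [mul_comm]
  congr 1
  exact prod_congr rfl fun i _ => by ring

lemma ascC_ne_zero {c : ℂ} (hc : ∀ i : ℕ, c + i ≠ 0) (k : ℕ) : ascC c k ≠ 0 :=
  prod_ne_zero_iff.mpr fun i _ => hc i

noncomputable def F2Term (n : ℕ) (b c : ℂ) (j : ℕ) : ℂ :=
  ascC (-(n : ℂ)) j * ascC b j / ascC c j * 2 ^ j / (j.factorial : ℂ)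

lemma F2_eq_sum_F2Term (n : ℕ) (b c : ℂ) :
    F2 n b c = ∑ j ∈ range (n + 1), F2Term n b c j := rfl

noncomputable def F2ContiguousWitness (n : ℕ) (b c : ℂ) : ℕ → ℂ
  | 0 => 0
  | k + 1 => 2 * ((k : ℂ) - n) * F2Term n b c k

lemma mul_F2Term_add_one (n : ℕ) (b c : ℂ) (j : ℕ) :
    b * F2Term n (b + 1) c j = (b + j) * F2Term n b c j := by
  have hb : b * ascC (b + 1) j = (b + j) * ascC b j := by rw [← ascC_succ', ascC_succ, mul_comm]
  simp only [F2Term]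
  linear_combination ascC (-(n : ℂ)) j / ascC c j * 2 ^ j / (j.factorial : ℂ) * hb

lemma F2Term_contiguous (n : ℕ) (b c : ℂ) (hc : ∀ i : ℕ, c + i ≠ 0) (j : ℕ) :
    (2 * n + c) * F2Term n b c j - b * F2Term n (b + 1) c j + (b - c) * F2Term n (b - 1) c j =
      F2ContiguousWitness n b c j - F2ContiguousWitness n b c (j + 1) := by
  rw [mul_F2Term_add_one]
  cases j with
  | zero => simp [F2Term, F2ContiguousWitness, ascC]
  | succ k =>
    have hck : c + k ≠ 0 := hc k
    have hC : ascC c k ≠ 0 := ascC_ne_zero hc k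
    have hk : (k : ℂ) + 1 ≠ 0 := Nat.cast_add_one_ne_zero k
    simp only [F2Term, F2ContiguousWitness]
    rw [ascC_succ' (b - 1), sub_add_cancel]
    simp only [ascC_succ, Nat.factorial_succ]
    push_cast
    field_simp
    ring

lemma F2_contiguous (n : ℕ) (b c : ℂ) (hc : ∀ i : ℕ, c + i ≠ 0) :
    (2 * n + c) * F2 n b c - b * F2 n (b + 1) c + (b - c) * F2 n (b - 1) c = 0 := by
  simp only [F2_eq_sum_F2Term, mul_sum, ← sum_sub_distrib, ← sum_add_distrib,
    F2Term_contiguous n b c hc, sum_range_sub' (F2ContiguousWitness n b c)]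
  simp [F2ContiguousWitness]

theorem stmt9 (μ : ℝ) (hμ : μ > -(1/2)) (m : ℕ) (n : ℕ) (hn : n = 2 * m) (s : ℂ)
    (p : ℂ → ℂ) (hp : ∀ z : ℂ, p z = F2 m (((μ : ℂ) + z) / 2) ((μ : ℂ) + 1/2)) :
    (2 * ((n : ℂ) + (μ : ℂ)) + 1) * (s + (μ : ℂ) - 2) * p s -
        (s + (μ : ℂ)) * (s + (μ : ℂ) - 2) * p (s + 2) +
        ((s - 2) * (s - 1) + (1 - (μ : ℂ)) * (μ : ℂ)) * p (s - 2) = 0 := by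
  have hc : ∀ i : ℕ, (μ : ℂ) + 1/2 + i ≠ 0 := fun i => by
    have hpos : (0 : ℝ) < μ + 1/2 + i := by linarith [(Nat.cast_nonneg i : (0 : ℝ) ≤ i)]
    simpa using Complex.ofReal_ne_zero.mpr hpos.ne'
  have hplus : p (s + 2) = F2 m ((μ + s) / 2 + 1) (μ + 1/2) := by rw [hp]; ring_nf
  have hminus : p (s - 2) = F2 m ((μ + s) / 2 - 1) (μ + 1/2) := by rw [hp]; ring_nf
  rw [hp s, hplus, hminus, hn]
  push_cast
  linear_combination 2 * (s + μ - 2) * F2_contiguous m ((μ + s) / 2) (μ + 1/2) hc
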